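/- arXiv:2510.24754 — 3 statements merged into one kernel-verified Lean document; each statement's English description precedes it below -/
import Mathlib

section
/- Let s₁, …, s_{ℓ+1} be exchangeable real-valued random variables and α ∈ [0,1]. Then the probability that |{i ∈ {1,…,ℓ+1} : s_i ≥ s_{ℓ+1}}|/(ℓ+1) > 1 − α is at least α. -/
open MeasureTheory Finset

lemma card_filter_perm' {n : ℕ} (σ : Equiv.Perm (Fin n)) (p : Fin n → Prop) [DecidablePred p] :
    (Finset.univ.filter (fun i => p (σ i))).card = (Finset.univ.filter p).card := by
  apply Finset.card_bij' (fun i _ => σ i) (fun i _ => σ.symm i) <;> simp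

lemma rank_count {n : ℕ} (x : Fin n → ℝ) (m : ℕ) :
    (univ.filter (fun j => (univ.filter (fun i => x j ≤ x i)).card ≤ m)).card ≤ m := by
  by_contra h
  push_neg at h
  set T := univ.filter (fun j => (univ.filter (fun i => x j ≤ x i)).card ≤ m) with hT
  have hne : T.Nonempty := Finset.card_pos.mp (lt_of_le_of_lt (Nat.zero_le m) h)
  obtain ⟨j, hjT, hjmin⟩ := Finset.exists_min_image T x hne
  have hsub : T ⊆ univ.filter (fun i => x j ≤ x i) := by
    intro i hi
    simp only [mem_filter, mem_univ, true_and]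
    exact hjmin i hi
  have h1 : T.card ≤ (univ.filter (fun i => x j ≤ x i)).card := Finset.card_le_card hsub
  have h2 : (univ.filter (fun i => x j ≤ x i)).card ≤ m := (mem_filter.mp hjT).2
  omega

lemma count_lower (ℓ : ℕ) (x : Fin (ℓ+1) → ℝ) (α : ℝ) (hα0 : 0 ≤ α) (hα1 : α ≤ 1) :
    α * ((ℓ:ℝ)+1) ≤ ((univ.filter (fun j : Fin (ℓ+1) =>
      ((univ.filter (fun i => x j ≤ x i)).card : ℝ) / ((ℓ:ℝ)+1) > 1 - α)).card : ℝ) := by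
  have hnpos : (0:ℝ) < (ℓ:ℝ) + 1 := by positivity
  have hnn : (0:ℝ) ≤ (1 - α) * ((ℓ:ℝ)+1) := by nlinarith
  set m : ℕ := ⌊(1 - α) * ((ℓ:ℝ)+1)⌋₊ with hm
  have hmle : (m:ℝ) ≤ (1 - α) * ((ℓ:ℝ)+1) := Nat.floor_le hnn
  have hiff : ∀ j : Fin (ℓ+1),
      (((univ.filter (fun i => x j ≤ x i)).card : ℝ) / ((ℓ:ℝ)+1) > 1 - α) ↔
      ¬ ((univ.filter (fun i => x j ≤ x i)).card ≤ m) := by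
    intro j
    rw [gt_iff_lt, lt_div_iff₀ hnpos, not_le, Nat.floor_lt hnn]
  have hcard : (univ.filter (fun j : Fin (ℓ+1) =>
      ((univ.filter (fun i => x j ≤ x i)).card : ℝ) / ((ℓ:ℝ)+1) > 1 - α)) =
      univ \ (univ.filter (fun j => (univ.filter (fun i => x j ≤ x i)).card ≤ m)) := by
    rw [Finset.filter_congr (fun j _ => by rw [hiff j]), Finset.filter_not]
  rw [hcard, Finset.card_sdiff_of_subset (Finset.filter_subset _ _), Finset.card_univ, Fintype.card_fin]
  have hsmall := rank_count x m
  have hmn : m ≤ ℓ + 1 := by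
    have h1 : (m:ℝ) ≤ ((ℓ+1:ℕ):ℝ) := le_trans hmle (by push_cast; nlinarith)
    exact_mod_cast h1
  rw [Nat.cast_sub (hsmall.trans hmn)]
  have h2 : ((univ.filter (fun j => (univ.filter (fun i => x j ≤ x i)).card ≤ m)).card : ℝ) ≤ (m:ℝ) := by
    exact_mod_cast hsmall
  push_cast
  nlinarith

theorem conformal_conservative_validity {Ω : Type*} [MeasurableSpace Ω]
    (μ : Measure Ω) [IsProbabilityMeasure μ] (ℓ : ℕ)
    (s : Fin (ℓ + 1) → Ω → ℝ) (hmeas : ∀ i, Measurable (s i))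
    (hexch : ∀ σ : Equiv.Perm (Fin (ℓ + 1)),
      Measure.map (fun ω => fun i => s (σ i) ω) μ
        = Measure.map (fun ω => fun i => s i ω) μ)
    (α : ℝ) (hα : α ∈ Set.Icc (0:ℝ) 1) :
    ENNReal.ofReal α ≤
      μ {ω | (((Finset.univ.filter
          (fun i : Fin (ℓ + 1) => s (Fin.last ℓ) ω ≤ s i ω)).card : ℝ) / (ℓ + 1)
        > 1 - α)} := by
  obtain ⟨hα0, hα1⟩ := hα
  classical
  -- the target set in sequence space, for each index j
  set A : Fin (ℓ+1) → Set (Fin (ℓ+1) → ℝ) := fun j =>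
    {x | ((univ.filter (fun i => x j ≤ x i)).card : ℝ) / ((ℓ:ℝ)+1) > 1 - α} with hA
  have hAmeas : ∀ j, MeasurableSet (A j) := by
    intro j
    have hg : Measurable (fun x : Fin (ℓ+1) → ℝ =>
        ((univ.filter (fun i => x j ≤ x i)).card : ℝ)) := by
      have : (fun x : Fin (ℓ+1) → ℝ => ((univ.filter (fun i => x j ≤ x i)).card : ℝ))
          = fun x => ∑ i, if x j ≤ x i then (1:ℝ) else 0 := by
        funext x
        rw [Finset.card_filter]
        push_cast
        rfl
      rw [this]
      exact Finset.measurable_sum _ (fun i _ =>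
        Measurable.ite (measurableSet_le (measurable_pi_apply j) (measurable_pi_apply i))
          measurable_const measurable_const)
    exact measurableSet_lt measurable_const (hg.div_const _)
  set f : Ω → (Fin (ℓ+1) → ℝ) := fun ω i => s i ω with hf
  have hfmeas : Measurable f := measurable_pi_lambda _ (fun i => hmeas i)
  -- events
  set E : Fin (ℓ+1) → Set Ω := fun j => f ⁻¹' (A j) with hE
  have hEmeas : ∀ j, MeasurableSet (E j) := fun j => hfmeas (hAmeas j)
  -- all events have the same probability as the last one
  have hsame : ∀ j, μ (E j) = μ (E (Fin.last ℓ)) := by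
    intro j
    set σ := Equiv.swap j (Fin.last ℓ) with hσ
    have hfσ : Measurable (fun ω => fun i => s (σ i) ω) :=
      measurable_pi_lambda _ (fun i => hmeas (σ i))
    have h1 : μ (E (Fin.last ℓ)) = Measure.map f μ (A (Fin.last ℓ)) :=
      (Measure.map_apply hfmeas (hAmeas _)).symm
    have h2 : Measure.map f μ (A (Fin.last ℓ))
        = Measure.map (fun ω => fun i => s (σ i) ω) μ (A (Fin.last ℓ)) := by
      rw [hexch σ]
    have h3 : Measure.map (fun ω => fun i => s (σ i) ω) μ (A (Fin.last ℓ))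
        = μ ((fun ω => fun i => s (σ i) ω) ⁻¹' (A (Fin.last ℓ))) :=
      Measure.map_apply hfσ (hAmeas _)
    have h4 : (fun ω => fun i => s (σ i) ω) ⁻¹' (A (Fin.last ℓ)) = E j := by
      ext ω
      simp only [hE, hA, Set.mem_preimage, Set.mem_setOf_eq, hf]
      have hlast : σ (Fin.last ℓ) = j := Equiv.swap_apply_right j (Fin.last ℓ)
      simp only [hlast]
      rw [card_filter_perm' σ (fun i => s j ω ≤ s i ω)]
    rw [h1, h2, h3, h4]
  -- sum of measures: pointwise count bound, then integrate
  have hsum : ENNReal.ofReal (α * ((ℓ:ℝ)+1)) ≤ ∑ j, μ (E j) := by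
    have hint : ∑ j, μ (E j) = ∫⁻ ω, ∑ j, (E j).indicator (fun _ => (1:ENNReal)) ω ∂μ := by
      rw [lintegral_finset_sum _ (fun j _ => (measurable_const.indicator (hEmeas j)))]
      congr 1
      funext j
      rw [lintegral_indicator (hEmeas j)]
      simp
    rw [hint]
    have hpt : ∀ ω, ENNReal.ofReal (α * ((ℓ:ℝ)+1))
        ≤ ∑ j, (E j).indicator (fun _ => (1:ENNReal)) ω := by
      intro ω
      have hcount : ∑ j, (E j).indicator (fun _ => (1:ENNReal)) ω
          = ((univ.filter (fun j => ω ∈ E j)).card : ENNReal) := by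
        rw [Finset.card_filter]
        push_cast
        exact Finset.sum_congr rfl (fun j _ => by
          by_cases h : ω ∈ E j <;> simp [Set.indicator, h])
      rw [hcount]
      have hset : (univ.filter (fun j => ω ∈ E j))
          = (univ.filter (fun j : Fin (ℓ+1) =>
            ((univ.filter (fun i => s j ω ≤ s i ω)).card : ℝ) / ((ℓ:ℝ)+1) > 1 - α)) := by
        apply Finset.filter_congr
        intro j _
        simp only [hE, hA, Set.mem_preimage, Set.mem_setOf_eq, hf]
      rw [hset]
      have := count_lower ℓ (fun i => s i ω) α hα0 hα1
      calc ENNReal.ofReal (α * ((ℓ:ℝ)+1))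
          ≤ ENNReal.ofReal (((univ.filter (fun j : Fin (ℓ+1) =>
            ((univ.filter (fun i => s j ω ≤ s i ω)).card : ℝ) / ((ℓ:ℝ)+1) > 1 - α)).card : ℝ)) :=
            ENNReal.ofReal_le_ofReal this
        _ = _ := ENNReal.ofReal_natCast _
    calc ENNReal.ofReal (α * ((ℓ:ℝ)+1))
        = ∫⁻ _, ENNReal.ofReal (α * ((ℓ:ℝ)+1)) ∂μ := by simp
      _ ≤ _ := lintegral_mono hpt
  -- finish
  have hsum2 : ∑ j, μ (E j) = ((ℓ:ENNReal)+1) * μ (E (Fin.last ℓ)) := by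
    rw [Finset.sum_congr rfl (fun j _ => hsame j), Finset.sum_const, Finset.card_univ,
      Fintype.card_fin]
    simp [nsmul_eq_mul]
  rw [hsum2] at hsum
  have hofmul : ENNReal.ofReal (α * ((ℓ:ℝ)+1)) = ((ℓ:ENNReal)+1) * ENNReal.ofReal α := by
    rw [ENNReal.ofReal_mul hα0]
    rw [mul_comm]
    congr 1
    rw [show ((ℓ:ℝ)+1) = ((ℓ+1:ℕ):ℝ) by push_cast; ring, ENNReal.ofReal_natCast]
    push_cast
    ring
  rw [hofmul] at hsum
  have hne0 : ((ℓ:ENNReal)+1) ≠ 0 := by simp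
  have hnetop : ((ℓ:ENNReal)+1) ≠ ⊤ := by
    simp [ENNReal.add_ne_top, ENNReal.natCast_ne_top]
  have := (ENNReal.mul_le_mul_iff_right hne0 hnetop).mp hsum
  -- identify E last with the set in the statement
  have hfinal : E (Fin.last ℓ) = {ω | (((Finset.univ.filter
          (fun i : Fin (ℓ + 1) => s (Fin.last ℓ) ω ≤ s i ω)).card : ℝ) / (ℓ + 1)
        > 1 - α)} := by
    ext ω
    simp only [hE, hA, Set.mem_preimage, Set.mem_setOf_eq, hf]
  rw [hfinal] at this
  exact this
end

section
/- Let s₁, …, s_{ℓ+1} be exchangeable real-valued random variables that are almost surely pairwise distinct, and α ∈ [0,1]. Then the probability that |{i : s_i ≥ s_{ℓ+1}}|/(ℓ+1) > 1 − α is at most α + 1/(ℓ+1). -/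
/-!
Let `R i = #{j | s j ≥ s i}` be the rank of `s i` counted from the top. Exchangeability makes
the events `{(1 - α)(ℓ + 1) < R i}` equiprobable, so `ℓ + 1` times the probability of the event
for `i = ℓ + 1` is the expected number of indices whose rank exceeds `(1 - α)(ℓ + 1)`. Without
ties the ranks are distinct elements of `{1, …, ℓ + 1}`, so at most `α (ℓ + 1) + 1` of them
exceed it.
-/

open MeasureTheory ENNReal Finset

section Rank

variable {ι α : Type*} [Fintype ι] [LinearOrder α]

def descRank (x : ι → α) (i : ι) : ℕ := #{j | x i ≤ x j}

lemma descRank_comp_perm (x : ι → α) (σ : Equiv.Perm ι) (i : ι) :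
    descRank (x ∘ σ) i = descRank x (σ i) :=
  card_equiv σ fun j => by simp

lemma descRank_pos (x : ι → α) (i : ι) : 0 < descRank x i :=
  card_pos.2 ⟨i, by simp⟩

lemma descRank_le_card (x : ι → α) (i : ι) : descRank x i ≤ Fintype.card ι :=
  card_le_univ _

lemma descRank_lt_descRank_of_lt {x : ι → α} {i j : ι} (h : x i < x j) :
    descRank x j < descRank x i :=
  card_lt_card <| (ssubset_iff_of_subset fun k hk => by simp at hk ⊢; exact h.le.trans hk).2
    ⟨i, by simp, by simpa using h⟩

lemma descRank_injective {x : ι → α} (hx : Function.Injective x) :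
    Function.Injective (descRank x) := by
  intro i j hij
  by_contra hne
  rcases (hx.ne hne).lt_or_gt with h | h
  · exact (descRank_lt_descRank_of_lt h).ne' hij
  · exact (descRank_lt_descRank_of_lt h).ne hij

lemma card_filter_lt_descRank_le {x : ι → α} (hx : Function.Injective x) (t : ℝ) :
    #{i | t < descRank x i} ≤ #{k ∈ Icc 1 (Fintype.card ι) | t < (k : ℕ)} :=
  card_le_card_of_injOn (descRank x)
    (fun i hi => by
      simp only [coe_filter, mem_univ, true_and, Set.mem_ofPred_eq, mem_Icc] at hi ⊢
      exact ⟨⟨descRank_pos x i, descRank_le_card x i⟩, hi⟩)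
    (descRank_injective hx).injOn

end Rank

lemma card_filter_lt_Icc_le_ofReal (n : ℕ) (t : ℝ) :
    (#{k ∈ Icc 1 n | t < (k : ℕ)} : ℝ≥0∞) ≤ ENNReal.ofReal (n + 1 - t) := by
  have hsub : {k ∈ Icc 1 n | t < (k : ℕ)} ⊆ Icc (⌊t⌋₊ + 1) n := fun k hk => by
    simp only [mem_filter, mem_Icc] at hk ⊢
    exact ⟨(Nat.floor_lt' (by omega)).2 hk.2, hk.1.2⟩
  calc (#{k ∈ Icc 1 n | t < (k : ℕ)} : ℝ≥0∞) ≤ (n - ⌊t⌋₊ : ℕ) := by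
        exact_mod_cast (card_le_card hsub).trans (by simp)
    _ = ENNReal.ofReal (n - ⌊t⌋₊) := by
        rw [ENNReal.natCast_sub, ENNReal.ofReal_sub _ (Nat.cast_nonneg _)]; simp
    _ ≤ ENNReal.ofReal (n + 1 - t) :=
        ENNReal.ofReal_le_ofReal (by linarith [Nat.lt_floor_add_one t])

section Exchangeable

variable {Ω ι : Type*} [MeasurableSpace Ω] {μ : Measure Ω} [Fintype ι] {X : ι → Ω → ℝ}

lemma measurable_descRank (i : ι) : Measurable fun x : ι → ℝ => descRank x i := by
  simp only [descRank, card_filter]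
  exact Finset.measurable_sum _ fun j _ =>
    Measurable.ite (measurableSet_le (measurable_pi_apply i) (measurable_pi_apply j))
      measurable_const measurable_const

lemma measurableSet_lt_descRank (t : ℝ) (i : ι) :
    MeasurableSet {x : ι → ℝ | t < descRank x i} :=
  measurableSet_lt measurable_const (measurable_from_nat.comp (measurable_descRank i))

lemma measure_lt_descRank_eq (hX : ∀ i, Measurable (X i))
    (hexch : ∀ σ : Equiv.Perm ι,
      Measure.map (fun ω i => X (σ i) ω) μ = Measure.map (fun ω i => X i ω) μ)
    (t : ℝ) (i j : ι) :
    μ {ω | t < descRank (fun k => X k ω) i} = μ {ω | t < descRank (fun k => X k ω) j} := by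
  classical
  have hXσ : Measurable fun ω k => X (Equiv.swap i j k) ω :=
    measurable_pi_lambda _ fun k => hX _
  calc μ {ω | t < descRank (fun k => X k ω) i}
      = μ ((fun ω k => X (Equiv.swap i j k) ω) ⁻¹' {x | t < descRank x j}) := by
        congr 1
        ext ω
        have hrank : descRank (fun k => X (Equiv.swap i j k) ω) j = descRank (fun k => X k ω) i :=
          (descRank_comp_perm (fun k => X k ω) (Equiv.swap i j) j).trans
            (congrArg _ (Equiv.swap_apply_right i j))
        simp only [Set.mem_preimage, Set.mem_ofPred_eq, hrank]
    _ = μ ((fun ω k => X k ω) ⁻¹' {x | t < descRank x j}) := by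
        rw [← Measure.map_apply hXσ (measurableSet_lt_descRank t j), hexch,
          Measure.map_apply (measurable_pi_lambda _ hX) (measurableSet_lt_descRank t j)]

lemma sum_measure_lt_descRank_le [IsProbabilityMeasure μ] (hX : ∀ i, Measurable (X i))
    (hinj : ∀ᵐ ω ∂μ, Function.Injective fun i => X i ω) (t : ℝ) :
    ∑ i, μ {ω | t < descRank (fun k => X k ω) i}
      ≤ ENNReal.ofReal (Fintype.card ι + 1 - t) := by
  have hE i : MeasurableSet {ω | t < descRank (fun k => X k ω) i} :=
    measurable_pi_lambda _ hX (measurableSet_lt_descRank t i)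
  calc ∑ i, μ {ω | t < descRank (fun k => X k ω) i}
      = ∫⁻ ω, ∑ i, {ω | t < descRank (fun k => X k ω) i}.indicator 1 ω ∂μ := by
        rw [lintegral_finsetSum _ fun i _ => measurable_one.indicator (hE i)]
        simp only [lintegral_indicator_one (hE _)]
    _ ≤ ∫⁻ _, ENNReal.ofReal (Fintype.card ι + 1 - t) ∂μ := by
        refine lintegral_mono_ae (hinj.mono fun ω hω => ?_)
        simp only [Set.indicator_apply, Set.mem_ofPred_eq, Pi.one_apply, sum_boole]
        exact (Nat.cast_le.2 (card_filter_lt_descRank_le hω t)).trans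
          (card_filter_lt_Icc_le_ofReal _ t)
    _ = ENNReal.ofReal (Fintype.card ι + 1 - t) := by simp

theorem card_mul_measure_lt_descRank_le [IsProbabilityMeasure μ] (hX : ∀ i, Measurable (X i))
    (hexch : ∀ σ : Equiv.Perm ι,
      Measure.map (fun ω i => X (σ i) ω) μ = Measure.map (fun ω i => X i ω) μ)
    (hinj : ∀ᵐ ω ∂μ, Function.Injective fun i => X i ω) (t : ℝ) (i : ι) :
    Fintype.card ι * μ {ω | t < descRank (fun k => X k ω) i}
      ≤ ENNReal.ofReal (Fintype.card ι + 1 - t) :=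
  calc Fintype.card ι * μ {ω | t < descRank (fun k => X k ω) i}
      = ∑ j, μ {ω | t < descRank (fun k => X k ω) j} := by
        simp [measure_lt_descRank_eq hX hexch t _ i]
    _ ≤ _ := sum_measure_lt_descRank_le hX hinj t

end Exchangeable

theorem conformal_upper_validity_general {Ω : Type*} [MeasurableSpace Ω]
    (μ : Measure Ω) [IsProbabilityMeasure μ] (ℓ : ℕ)
    (s : Fin (ℓ + 1) → Ω → ℝ) (hmeas : ∀ i, Measurable (s i))
    (hexch : ∀ σ : Equiv.Perm (Fin (ℓ + 1)),
      Measure.map (fun ω => fun i => s (σ i) ω) μ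
        = Measure.map (fun ω => fun i => s i ω) μ)
    (hdist : ∀ᵐ ω ∂μ, ∀ i j : Fin (ℓ + 1), i ≠ j → s i ω ≠ s j ω)
    (α : ℝ) :
    μ {ω | (((Finset.univ.filter
        (fun i : Fin (ℓ + 1) => s (Fin.last ℓ) ω ≤ s i ω)).card : ℝ) / (ℓ + 1)
      > 1 - α)}
      ≤ ENNReal.ofReal (α + 1 / (ℓ + 1)) := by
  have hn : (0 : ℝ) < ℓ + 1 := by positivity
  have hinj : ∀ᵐ ω ∂μ, Function.Injective fun i => s i ω :=
    hdist.mono fun ω hω => Function.injective_iff_pairwise_ne.2 hω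
  have hevent : {ω | (((Finset.univ.filter
        (fun i : Fin (ℓ + 1) => s (Fin.last ℓ) ω ≤ s i ω)).card : ℝ) / (ℓ + 1)
      > 1 - α)}
      = {ω | (1 - α) * (ℓ + 1) < descRank (fun k => s k ω) (Fin.last ℓ)} := by
    ext ω
    rw [Set.mem_ofPred_eq, gt_iff_lt, lt_div_iff₀ hn]
    rfl
  have hbound : ENNReal.ofReal (α + 1 / (ℓ + 1))
      = ENNReal.ofReal ((ℓ + 1 : ℕ) + 1 - (1 - α) * (ℓ + 1)) / (ℓ + 1 : ℕ) := by
    rw [← ENNReal.ofReal_natCast, ← ENNReal.ofReal_div_of_pos (by positivity)]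
    congr 1
    field_simp
    push_cast
    ring
  rw [hevent, hbound, ENNReal.le_div_iff_mul_le (by simp) (by simp), mul_comm]
  simpa using card_mul_measure_lt_descRank_le hmeas hexch hinj ((1 - α) * (ℓ + 1)) (Fin.last ℓ)

theorem conformal_upper_validity {Ω : Type*} [MeasurableSpace Ω]
    (μ : Measure Ω) [IsProbabilityMeasure μ] (ℓ : ℕ)
    (s : Fin (ℓ + 1) → Ω → ℝ) (hmeas : ∀ i, Measurable (s i))
    (hexch : ∀ σ : Equiv.Perm (Fin (ℓ + 1)),
      Measure.map (fun ω => fun i => s (σ i) ω) μ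
        = Measure.map (fun ω => fun i => s i ω) μ)
    (hdist : ∀ᵐ ω ∂μ, ∀ i j : Fin (ℓ + 1), i ≠ j → s i ω ≠ s j ω)
    (α : ℝ) (hα : α ∈ Set.Icc (0:ℝ) 1) :
    μ {ω | (((Finset.univ.filter
        (fun i : Fin (ℓ + 1) => s (Fin.last ℓ) ω ≤ s i ω)).card : ℝ) / (ℓ + 1)
      > 1 - α)}
      ≤ ENNReal.ofReal (α + 1 / (ℓ + 1)) :=
  conformal_upper_validity_general μ ℓ s hmeas hexch hdist α
end

section
/- Let s₁ ≤ s₂ ≤ … ≤ s_ℓ be sorted real numbers, α ∈ (0,1], and s a real number. Then |{i ∈ {1,…,ℓ} : s_i ≥ s}| + 1 > (1 − α)(ℓ + 1) holds if and only if s ≤ s_{(⌈α(ℓ+1)⌉)}, provided ⌈α(ℓ+1)⌉ ≤ ℓ. -/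
lemma card_filter_le_val (ℓ a : ℕ) :
    (Finset.univ.filter (fun i : Fin ℓ => a ≤ i.val)).card = ℓ - a := by
  have h : (Finset.univ.filter (fun i : Fin ℓ => a ≤ i.val)).card
      = (Finset.Ico a ℓ).card := by
    apply Finset.card_bij (fun i _ => i.val)
    · intro i hi; simp only [Finset.mem_filter] at hi
      simp [Finset.mem_Ico, hi.2, i.isLt]
    · intro i _ j _ h; exact Fin.val_injective h
    · intro b hb
      simp only [Finset.mem_Ico] at hb
      exact ⟨⟨b, hb.2⟩, by simp [hb.1], rfl⟩
  rw [h, Nat.card_Ico]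

theorem conformal_threshold_equiv (ℓ : ℕ) (hℓ : 0 < ℓ) (s : Fin ℓ → ℝ)
    (hsorted : Monotone s) (α : ℝ) (hα : α ∈ Set.Ioc (0:ℝ) 1)
    (hk : (⌈α * (ℓ + 1)⌉).toNat ≤ ℓ) (t : ℝ) :
    (((Finset.univ.filter (fun i : Fin ℓ => t ≤ s i)).card + 1 : ℝ) > (1 - α) * (ℓ + 1)) ↔
      t ≤ s ⟨(⌈α * (ℓ + 1)⌉).toNat - 1, by omega⟩ := by
  obtain ⟨hα0, hα1⟩ := hα
  set β : ℝ := α * (ℓ + 1) with hβ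
  have hβpos : 0 < β := by positivity
  have hceil1 : 1 ≤ ⌈β⌉ := Int.ceil_pos.mpr hβpos
  set k : ℕ := (⌈β⌉).toNat with hkdef
  have hk1 : 1 ≤ k := by omega
  set c : ℕ := (Finset.univ.filter (fun i : Fin ℓ => t ≤ s i)).card with hc
  have hA : ((c : ℝ) + 1 > (1 - α) * (ℓ + 1)) ↔ ℓ + 1 ≤ c + k := by
    have h1 : (1 - α) * ((ℓ:ℝ) + 1) = ((ℓ:ℝ) + 1) - β := by rw [hβ]; ring
    rw [h1]
    constructor
    · intro h
      have h2 : (((ℓ:ℤ) - c : ℤ) : ℝ) < β := by push_cast; linarith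
      have := Int.lt_ceil.mpr h2
      omega
    · intro h
      have h2 : ((ℓ:ℤ) - c) < ⌈β⌉ := by omega
      have := Int.lt_ceil.mp h2
      push_cast at this; linarith
  rw [hA]
  constructor
  · intro h
    by_contra hlt
    push_neg at hlt
    have hsub : (Finset.univ.filter (fun i : Fin ℓ => t ≤ s i)) ⊆
        (Finset.univ.filter (fun i : Fin ℓ => k ≤ i.val)) := by
      intro i hi
      simp only [Finset.mem_filter, Finset.mem_univ, true_and] at hi ⊢
      by_contra hik
      push_neg at hik
      have : i ≤ ⟨k - 1, by omega⟩ := by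
        rw [Fin.le_def]; simp; omega
      exact absurd (hi.trans_lt ((hsorted this).trans_lt hlt)) (lt_irrefl t)
    have := Finset.card_le_card hsub
    rw [card_filter_le_val] at this
    omega
  · intro h
    have hsub : (Finset.univ.filter (fun i : Fin ℓ => k - 1 ≤ i.val)) ⊆
        (Finset.univ.filter (fun i : Fin ℓ => t ≤ s i)) := by
      intro i hi
      simp only [Finset.mem_filter, Finset.mem_univ, true_and] at hi ⊢
      have hle : (⟨k - 1, by omega⟩ : Fin ℓ) ≤ i := by
        rw [Fin.le_def]; simpa using hi
      exact h.trans (hsorted hle)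
    have := Finset.card_le_card hsub
    rw [card_filter_le_val] at this
    omega
end
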